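/- arXiv:1907.13493 — 2 statements merged into one kernel-verified Lean document; each statement's English description precedes it below -/
import Mathlib

section
/- For every integer d ≥ 1 there exists a constant c_d > 0 depending only on d such that for every integer t ≥ 1, every triangular complex spherical t-design z_1, …, z_N on Ω^d satisfies N ≥ c_d · t^{2d−1}; that is, the order t^{2d−1} in the existence theorem is optimal. -/
/-!
Let `s = ⌊t/2⌋`. If a polynomial `P` in `z, z̄` of degree at most `s` vanishes at the nodes of a
`t`-design, then the design property applied to `P · conj P` gives `∫ |P|² dμ = 0`, and since a
unitarily invariant probability measure charges every open set, `P` vanishes on all of `Ω^d`.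
A polynomial in `z_1, …, z_d, z̄_2, …, z̄_d` vanishing on `Ω^d` is zero: with `z_2, …, z_d` small,
`z_1` may run over a whole circle, and a polynomial in `z, z̄` vanishing near `0` is zero (pass to
real and imaginary parts). So evaluation at the nodes is injective on the polynomials in these
`2d - 1` variables of degree at most `s`, which contain the `(k + 1)^(2d-1)` monomials with all
exponents at most `k = ⌊s / (2d - 1)⌋`; hence `N ≥ (k + 1)^(2d-1) ≥ (t / (2(2d - 1)))^(2d-1)`.
-/

noncomputable section
open MeasureTheory Metric MvPolynomial ENNReal

instance (d : ℕ) : MeasurableSpace (EuclideanSpace ℂ (Fin d)) := borel _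
instance (d : ℕ) : BorelSpace (EuclideanSpace ℂ (Fin d)) := ⟨rfl⟩

/-- The complex unit sphere `Ω^d ⊆ ℂ^d`. -/
abbrev CSph (d : ℕ) : Type := Metric.sphere (0 : EuclideanSpace ℂ (Fin d)) 1

def csMap {d : ℕ} (f : EuclideanSpace ℂ (Fin d) ≃ₗᵢ[ℂ] EuclideanSpace ℂ (Fin d))
    (z : CSph d) : CSph d :=
  ⟨f z, by
    have hz := z.2
    simp only [mem_sphere_iff_norm, sub_zero] at hz ⊢
    simp [hz]⟩

/-- `μ` is the uniform (unitarily invariant) probability measure on `Ω^d`. -/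
def IsUniformC {d : ℕ} (μ : Measure (CSph d)) : Prop :=
  IsProbabilityMeasure μ ∧
    ∀ f : EuclideanSpace ℂ (Fin d) ≃ₗᵢ[ℂ] EuclideanSpace ℂ (Fin d),
      Measure.map (csMap f) μ = μ

/-- Evaluation of `Q ∈ ℂ[u₁,…,u_d,v₁,…,v_d]` at `u_j = z_j`, `v_j = conj (z_j)`. -/
def evalC {d : ℕ} (Q : MvPolynomial (Fin d ⊕ Fin d) ℂ) (z : CSph d) : ℂ :=
  MvPolynomial.eval
    (Sum.elim (fun j => (z : EuclideanSpace ℂ (Fin d)) j)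
      (fun j => (starRingEnd ℂ) ((z : EuclideanSpace ℂ (Fin d)) j))) Q

/-- A finite family of points of `Ω^d` is a triangular complex spherical `t`-design. -/
def IsTriDesign {d : ℕ} (μ : Measure (CSph d)) (t : ℕ)
    {ι : Type} [Fintype ι] (z : ι → CSph d) : Prop :=
  ∀ Q : MvPolynomial (Fin d ⊕ Fin d) ℂ, Q.totalDegree ≤ t →
    (Fintype.card ι : ℂ)⁻¹ * ∑ i, evalC Q (z i) = ∫ w, evalC Q w ∂μ

open Complex ComplexConjugate

namespace MvPolynomial

variable {σ : Type*}

theorem eq_zero_of_eval_zero_of_infinite {R : Type*} [CommRing R] [IsDomain R] [Finite σ]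
    (P : MvPolynomial σ R) (S : σ → Set R) (hS : ∀ i, (S i).Infinite)
    (h : ∀ x : σ → R, (∀ i, x i ∈ S i) → eval x P = 0) : P = 0 := by
  choose T hTS hT using fun i => (hS i).exists_subset_card_eq (P.degreeOf i + 1)
  exact eq_zero_of_eval_zero_at_prod_finset P T (fun i => by simp [hT i])
    fun x hx => h x fun i => hTS i (hx i)

theorem eval_update_eq_zero_of_infinite {R : Type*} [CommRing R] [IsDomain R] [DecidableEq σ]
    (P : MvPolynomial σ R) (x : σ → R) (i : σ) {S : Set R} (hS : S.Infinite)
    (h : ∀ w ∈ S, eval (Function.update x i w) P = 0) (w : R) :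
    eval (Function.update x i w) P = 0 := by
  set f : Polynomial R := aeval (Function.update (Polynomial.C ∘ x) i Polynomial.X) P
  have hf : ∀ w, f.eval w = eval (Function.update x i w) P := by
    intro w
    rw [← Polynomial.coe_aeval_eq_eval, ← aeval_eq_eval, ← AlgHom.comp_apply, comp_aeval]
    congr 2 with j
    rcases eq_or_ne j i with rfl | hj <;> simp [*]
  have : f = 0 := Polynomial.eq_zero_of_infinite_isRoot f (hS.mono fun w hw => by
    simpa [Polynomial.IsRoot, hf] using h w hw)
  rw [← hf, this, Polynomial.eval_zero]

def realCoords (σ : Type*) : MvPolynomial (σ ⊕ σ) ℂ →ₐ[ℂ] MvPolynomial (σ ⊕ σ) ℂ :=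
  bind₁ (Sum.elim (fun j => X (.inl j) + C I * X (.inr j))
    (fun j => X (.inl j) - C I * X (.inr j)))

theorem eval_realCoords (a b : σ → ℂ) (Q : MvPolynomial (σ ⊕ σ) ℂ) :
    eval (Sum.elim a b) (realCoords σ Q) = eval (Sum.elim (a + I • b) (a - I • b)) Q := by
  rw [realCoords, ← aeval_eq_eval, ← aeval_eq_eval, aeval_bind₁]
  congr 2 with (j | j) <;> simp [mul_comm]

theorem realCoords_injective : Function.Injective (realCoords σ) := by
  rw [injective_iff_map_eq_zero]
  intro Q hQ
  refine funext fun w => ?_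
  -- every `(u, v)` is `(a + i b, a - i b)` with `a = (u + v) / 2`, `b = -i (u - v) / 2`
  have := congrArg (eval (Sum.elim ((2 : ℂ)⁻¹ • (w ∘ .inl + w ∘ .inr))
    ((-I / 2) • (w ∘ .inl - w ∘ .inr)))) hQ
  rw [eval_realCoords, map_zero] at this
  rw [map_zero, ← this]
  congr 2
  ext (j | j)
  · simp only [Sum.elim_inl, Function.comp_apply, Pi.add_apply, Pi.sub_apply, Pi.smul_apply,
      smul_eq_mul]
    linear_combination (w (.inl j) - w (.inr j)) / 2 * I_mul_I
  · simp only [Sum.elim_inr, Function.comp_apply, Pi.add_apply, Pi.sub_apply, Pi.smul_apply,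
      smul_eq_mul]
    linear_combination -(w (.inl j) - w (.inr j)) / 2 * I_mul_I

theorem eq_zero_of_eval_conj_eq_zero [Finite σ] (Q : MvPolynomial (σ ⊕ σ) ℂ) {ε : ℝ} (hε : 0 < ε)
    (h : ∀ z : σ → ℂ, (∀ j, ‖z j‖ < ε) → eval (Sum.elim z fun j => conj (z j)) Q = 0) :
    Q = 0 := by
  refine realCoords_injective ?_
  rw [map_zero]
  refine eq_zero_of_eval_zero_of_infinite _ (fun _ => ofReal '' Set.Ioo (-(ε / 2)) (ε / 2))
    (fun _ => (Set.Ioo_infinite (by linarith)).image ofReal_injective.injOn) fun x hx => ?_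
  choose r hr hrx using hx
  obtain rfl : x = Sum.elim (fun j => (r (.inl j) : ℂ)) (fun j => (r (.inr j) : ℂ)) := by
    ext (j | j) <;> simp [hrx]
  rw [eval_realCoords]
  convert h (fun j => r (.inl j) + I * r (.inr j)) (fun j => ?_) using 2
  · ext (j | j) <;> simp [sub_eq_add_neg]
  · calc ‖(r (.inl j) : ℂ) + I * (r (.inr j) : ℂ)‖ ≤ |r (.inl j)| + |r (.inr j)| := by
          simpa using norm_add_le (r (.inl j) : ℂ) (I * r (.inr j))
      _ < ε / 2 + ε / 2 := add_lt_add (abs_lt.2 (hr _)) (abs_lt.2 (hr _))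
      _ = ε := add_halves ε

end MvPolynomial

theorem Complex.sphere_zero_infinite {r : ℝ} (hr : 0 < r) : (sphere (0 : ℂ) r).Infinite :=
  (isPreconnected_sphere (by rw [rank_real_complex]; norm_num) 0 r).infinite_of_nontrivial
    ⟨r, by simp [abs_of_pos hr], -r, by simp [abs_of_pos hr],
      by exact_mod_cast (show r ≠ -r by linarith)⟩

theorem continuous_csMap {d : ℕ} (f : EuclideanSpace ℂ (Fin d) ≃ₗᵢ[ℂ] EuclideanSpace ℂ (Fin d)) :
    Continuous (csMap f) :=
  (f.continuous.comp continuous_subtype_val).subtype_mk _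

theorem exists_csMap_eq {d : ℕ} (x y : CSph d) : ∃ f, csMap f x = y := by
  obtain _ | e := d
  · have hx := norm_eq_of_mem_sphere x
    simp [Subsingleton.elim (x : EuclideanSpace ℂ (Fin 0)) 0] at hx
  have hcard : Module.finrank ℂ (EuclideanSpace ℂ (Fin (e + 1))) = Fintype.card (Fin (e + 1)) :=
    finrank_euclideanSpace
  have hon (u : CSph (e + 1)) : Orthonormal ℂ (({0} : Set (Fin (e + 1))).domRestrict
      fun _ => (u : EuclideanSpace ℂ (Fin (e + 1)))) :=
    orthonormal_subsingleton_iff.2 fun _ => norm_eq_of_mem_sphere u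
  obtain ⟨b₁, hb₁⟩ := (hon x).exists_orthonormalBasis_extension_of_card_eq hcard
  obtain ⟨b₂, hb₂⟩ := (hon y).exists_orthonormalBasis_extension_of_card_eq hcard
  refine ⟨b₁.repr.trans b₂.repr.symm, Subtype.ext ?_⟩
  simp [csMap, ← hb₁ 0 rfl, ← hb₂ 0 rfl]

theorem IsUniformC.isOpenPosMeasure {d : ℕ} {μ : Measure (CSph d)} (hμ : IsUniformC μ) :
    μ.IsOpenPosMeasure := by
  have := hμ.1
  refine ⟨fun U hU ⟨w₀, hw₀⟩ hμU => ?_⟩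
  have hcover (w : CSph d) :
      ∃ V : Set (CSph d), IsOpen V ∧ w ∈ V ∧ μ V = 0 := by
    obtain ⟨f, hf⟩ := exists_csMap_eq w w₀
    refine ⟨csMap f ⁻¹' U, hU.preimage (continuous_csMap f), by simp [hf, hw₀], ?_⟩
    rw [← Measure.map_apply (continuous_csMap f).measurable hU.measurableSet, hμ.2 f, hμU]
  choose V hVopen hwV hμV using hcover
  obtain ⟨T, hT⟩ :=
    isCompact_univ.elim_finite_subcover V hVopen fun w _ => Set.mem_iUnion.2 ⟨w, hwV w⟩
  have := (measure_mono (μ := μ) hT).trans (measure_biUnion_finset_le T V)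
  simp [hμV] at this

theorem continuous_evalC {d : ℕ} (Q : MvPolynomial (Fin d ⊕ Fin d) ℂ) :
    Continuous (evalC Q) := by
  refine (continuous_eval Q).comp (continuous_pi fun i => ?_)
  have hcoord (j : Fin d) : Continuous fun z : CSph d => (z : EuclideanSpace ℂ (Fin d)) j :=
    (EuclideanSpace.proj j).continuous.comp continuous_subtype_val
  rcases i with j | j
  · exact hcoord j
  · exact continuous_conj.comp (hcoord j)

theorem evalC_mul {d : ℕ} (P Q : MvPolynomial (Fin d ⊕ Fin d) ℂ) (z : CSph d) :
    evalC (P * Q) z = evalC P z * evalC Q z :=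
  map_mul _ P Q

def conjPoly {d : ℕ} (P : MvPolynomial (Fin d ⊕ Fin d) ℂ) : MvPolynomial (Fin d ⊕ Fin d) ℂ :=
  rename Sum.swap (map (starRingEnd ℂ) P)

theorem evalC_conjPoly {d : ℕ} (P : MvPolynomial (Fin d ⊕ Fin d) ℂ) (z : CSph d) :
    evalC (conjPoly P) z = conj (evalC P z) := by
  rw [evalC, evalC, conjPoly, eval_rename, eval_map, MvPolynomial.eval, coe_eval₂Hom,
    eval₂_comp_left, RingHom.comp_id]
  congr 1 with (j | j) <;> simp

theorem totalDegree_conjPoly_le {d : ℕ} (P : MvPolynomial (Fin d ⊕ Fin d) ℂ) :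
    (conjPoly P).totalDegree ≤ P.totalDegree :=
  (totalDegree_rename_le _ _).trans (Finset.sup_mono (support_map_subset _ _))

theorem eq_zero_of_evalC_rename_eq_zero {e : ℕ} (R : MvPolynomial (Fin (e + 1) ⊕ Fin e) ℂ)
    (h : ∀ w : CSph (e + 1), evalC (rename (Sum.map id Fin.succ) R) w = 0) : R = 0 := by
  set F : (Fin (e + 1) → ℂ) → ℂ := fun z => eval (Sum.elim z fun j => conj (z j.succ)) R
  have hF (z : Fin (e + 1) → ℂ) :
      eval (Sum.elim z fun j => conj (z j)) (rename (Sum.map id Fin.succ) R) = F z := by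
    rw [eval_rename]
    congr 2 with (j | j) <;> rfl
  have hsphere (z : Fin (e + 1) → ℂ) (hz : ∑ j, ‖z j‖ ^ 2 = 1) : F z = 0 := by
    rw [← hF]
    exact h ⟨WithLp.toLp 2 z, by simp [EuclideanSpace.norm_eq, hz]⟩
  refine rename_injective _ (Sum.map_injective.2 ⟨Function.injective_id, Fin.succ_injective _⟩) ?_
  rw [map_zero]
  refine eq_zero_of_eval_conj_eq_zero _ (ε := 1 / (e + 1)) (by positivity) fun z hz => ?_
  rw [hF]
  have htail : ∑ j : Fin e, ‖z j.succ‖ ^ 2 < 1 :=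
    calc ∑ j : Fin e, ‖z j.succ‖ ^ 2 ≤ ∑ _j : Fin e, (1 / (e + 1) : ℝ) ^ 2 :=
          Finset.sum_le_sum fun j _ => pow_le_pow_left₀ (norm_nonneg _) (hz _).le 2
      _ = e * (1 / (e + 1)) ^ 2 := by simp
      _ < 1 := by rw [div_pow, one_pow, mul_one_div, div_lt_one (by positivity)]; nlinarith
  -- with its tail fixed, `z` can be moved onto the sphere by changing `z 0` only
  have hFupdate (w : ℂ) : F (Function.update z 0 w) =
      eval (Function.update (Sum.elim z fun j => conj (z j.succ)) (.inl 0) w) R := by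
    simp only [F, Sum.update_elim_inl]
    congr 3 with j
  rw [← Function.update_eq_self 0 z, hFupdate]
  refine eval_update_eq_zero_of_infinite _ _ _
    (sphere_zero_infinite (r := √(1 - ∑ j : Fin e, ‖z j.succ‖ ^ 2)) (by simpa using htail))
    (fun w hw => ?_) _
  rw [← hFupdate]
  refine hsphere _ ?_
  rw [mem_sphere_zero_iff_norm] at hw
  simp [Fin.sum_univ_succ, hw, Real.sq_sqrt (sub_nonneg.2 htail.le)]

theorem IsTriDesign.evalC_eq_zero {d t : ℕ} {μ : Measure (CSph d)} (hμ : IsUniformC μ)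
    {ι : Type} [Fintype ι] {z : ι → CSph d} (hz : IsTriDesign μ t z)
    {P : MvPolynomial (Fin d ⊕ Fin d) ℂ} (hP : 2 * P.totalDegree ≤ t)
    (hPz : ∀ i, evalC P (z i) = 0) (w : CSph d) : evalC P w = 0 := by
  have := hμ.1
  have := hμ.isOpenPosMeasure
  set g : CSph d → ℝ := fun w => normSq (evalC P w)
  have hg : Continuous g := continuous_normSq.comp (continuous_evalC P)
  have hPP (w : CSph d) : evalC (P * conjPoly P) w = g w := by
    rw [evalC_mul, evalC_conjPoly, mul_conj]
  have hint : ∫ w, g w ∂μ = 0 := by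
    have := hz (P * conjPoly P)
      ((totalDegree_mul _ _).trans (by linarith [totalDegree_conjPoly_le P]))
    simp only [hPP, integral_complex_ofReal] at this
    simp only [g, hPz, map_zero, Complex.ofReal_zero, Finset.sum_const_zero, mul_zero] at this
    exact_mod_cast this.symm
  have hae : g =ᵐ[μ] 0 := (integral_eq_zero_iff_of_nonneg (fun w => normSq_nonneg _)
    (hg.integrable_of_hasCompactSupport (HasCompactSupport.of_compactSpace g))).1 hint
  exact normSq_eq_zero.1 (congrFun ((hg.ae_eq_iff_eq μ continuous_const).1 hae) w)

theorem IsTriDesign.card_le_of_linearIndependent {e t : ℕ} {μ : Measure (CSph (e + 1))}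
    (hμ : IsUniformC μ) {ι : Type} [Fintype ι] {z : ι → CSph (e + 1)} (hz : IsTriDesign μ t z)
    {κ : Type*} [Fintype κ] {v : κ → MvPolynomial (Fin (e + 1) ⊕ Fin e) ℂ}
    (hv : LinearIndependent ℂ v) {m : ℕ} (hvm : ∀ q, (v q).totalDegree ≤ m) (hm : 2 * m ≤ t) :
    Fintype.card κ ≤ Fintype.card ι := by
  let E : MvPolynomial (Fin (e + 1) ⊕ Fin e) ℂ →ₗ[ℂ] ι → ℂ :=
    { toFun := fun R i => evalC (rename (Sum.map id Fin.succ) R) (z i)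
      map_add' := fun R S => by ext; simp [evalC]
      map_smul' := fun c R => by ext; simp [evalC] }
  have hdisj : Disjoint (Submodule.span ℂ (Set.range v)) (LinearMap.ker E) := by
    rw [Submodule.disjoint_def]
    intro R hRspan hRker
    have hspan : Submodule.span ℂ (Set.range v) ≤ restrictTotalDegree _ ℂ m :=
      Submodule.span_le.2 <| Set.range_subset_iff.2 fun q =>
        (mem_restrictTotalDegree _ _ _).2 (hvm q)
    have hR : R.totalDegree ≤ m := (mem_restrictTotalDegree _ _ _).1 (hspan hRspan)
    refine eq_zero_of_evalC_rename_eq_zero R (hz.evalC_eq_zero hμ ?_ fun i => congrFun hRker i)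
    linarith [totalDegree_rename_le (Sum.map id Fin.succ) R]
  simpa using (hv.map hdisj).fintype_card_le_finrank

theorem linearIndependent_monomial_fin (R σ : Type*) [CommRing R] [Finite σ] (k : ℕ) :
    LinearIndependent R fun q : σ → Fin (k + 1) =>
      (monomial (Finsupp.equivFunOnFinite.symm (Fin.val ∘ q)) 1 : MvPolynomial σ R) :=
  (basisMonomials σ R).linearIndependent.comp _
    (Finsupp.equivFunOnFinite.symm.injective.comp Fin.val_injective.comp_left)

theorem totalDegree_monomial_fin_le {R σ : Type*} [CommRing R] [Fintype σ] {k : ℕ}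
    (q : σ → Fin (k + 1)) :
    (monomial (Finsupp.equivFunOnFinite.symm (Fin.val ∘ q)) (1 : R)).totalDegree ≤
      Fintype.card σ * k := by
  refine (totalDegree_monomial_le _ _).trans ?_
  change ((Finsupp.equivFunOnFinite.symm (Fin.val ∘ q)).sum fun _ n => n) ≤ _
  rw [Finsupp.equivFunOnFinite_symm_sum]
  calc ∑ i, (q i : ℕ) ≤ ∑ _i : σ, k := Finset.sum_le_sum fun i _ => Nat.lt_succ_iff.1 (q i).2
    _ = Fintype.card σ * k := by simp

theorem Nat.cast_div_le_div_div_add_one (t p : ℕ) (hp : 0 < p) :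
    (t : ℝ) / (2 * p) ≤ (t / 2 / p + 1 : ℕ) := by
  rw [div_le_iff₀ (by positivity)]
  have := Nat.lt_mul_div_succ (t / 2) hp
  have : (t / 2 / p + 1) * (2 * p) = 2 * (p * (t / 2 / p + 1)) := by ring
  exact_mod_cast (by omega : t ≤ (t / 2 / p + 1) * (2 * p))

/-- the order `t^{2d-1}` is optimal: every triangular complex spherical
`t`-design has at least `c_d t^{2d-1}` points. -/
theorem triangular_design_lower_bound (d : ℕ) (hd : 1 ≤ d) :
    ∃ c : ℝ, 0 < c ∧ ∀ t : ℕ, 1 ≤ t → ∀ N : ℕ, ∀ z : Fin N → CSph d,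
      ∀ μ : Measure (CSph d), IsUniformC μ → IsTriDesign μ t z →
        c * (t : ℝ) ^ (2 * d - 1) ≤ (N : ℝ) := by
  obtain ⟨e, rfl⟩ : ∃ e, d = e + 1 := ⟨d - 1, by omega⟩
  set p := 2 * (e + 1) - 1
  have hp0 : Fintype.card (Fin (e + 1) ⊕ Fin e) = p := by simp [p]; omega
  have hp : 0 < p := by omega
  refine ⟨(2 * p : ℝ)⁻¹ ^ p, by positivity, fun t _ N z μ hμ hz => ?_⟩
  have hN : (t / 2 / p + 1) ^ p ≤ N := by
    simpa [hp0] using hz.card_le_of_linearIndependent hμ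
      (linearIndependent_monomial_fin ℂ _ (t / 2 / p)) totalDegree_monomial_fin_le
      (by rw [hp0]; have := Nat.mul_div_le (t / 2) p; omega)
  calc (2 * p : ℝ)⁻¹ ^ p * t ^ p = (t / (2 * p)) ^ p := by rw [div_eq_inv_mul, mul_pow]
    _ ≤ ((t / 2 / p + 1 : ℕ) : ℝ) ^ p :=
        pow_le_pow_left₀ (by positivity) (Nat.cast_div_le_div_div_add_one t p hp) p
    _ ≤ N := by exact_mod_cast hN
end
end

section
/- Let d ≥ 2 and k, l ≥ 0. The ℂ-vector space of polynomials Q ∈ ℂ[u_1,…,u_d,v_1,…,v_d] that are homogeneous of degree k in the variables u_1,…,u_d, homogeneous of degree l in the variables v_1,…,v_d, and satisfy the harmonicity condition Σ_{j=1}^d ∂²Q/∂u_j∂v_j = 0, has dimension Z^{(d)}_{k,l} = (d−1)·(k+l+d−1)·Γ(d+k−1)·Γ(d+l−1) / (Γ(d)²·Γ(k+1)·Γ(l+1)). -/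
noncomputable section
open MeasureTheory Metric MvPolynomial ENNReal

/-- weight counting only the `u`-variables -/
def wU (d : ℕ) : Fin d ⊕ Fin d → ℕ := Sum.elim (fun _ => 1) (fun _ => 0)
/-- weight counting only the `v`-variables -/
def wV (d : ℕ) : Fin d ⊕ Fin d → ℕ := Sum.elim (fun _ => 0) (fun _ => 1)

/-- the formal Laplacian `∑_j ∂²/∂u_j∂v_j` -/
def laplaceUV (d : ℕ) :
    MvPolynomial (Fin d ⊕ Fin d) ℂ →ₗ[ℂ] MvPolynomial (Fin d ⊕ Fin d) ℂ :=
  ∑ j : Fin d, ((pderiv (R := ℂ) (Sum.inl j)).toLinearMap ∘ₗ (pderiv (Sum.inr j)).toLinearMap)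

/-- the space `ℋ_{k,l}`: polynomials homogeneous of degree `k` in `u`, degree `l` in `v`,
and annihilated by `∑_j ∂²/∂u_j∂v_j` -/
def biHarmSpace (d k l : ℕ) : Submodule ℂ (MvPolynomial (Fin d ⊕ Fin d) ℂ) :=
  weightedHomogeneousSubmodule ℂ (wU d) k ⊓ weightedHomogeneousSubmodule ℂ (wV d) l ⊓
    LinearMap.ker (laplaceUV d)

/-!
With `W_{k,l}` the polynomials of bidegree `(k, l)`, a monomial count gives
`dim W_{k,l} = multichoose d k * multichoose d l`. Let `r = ∑ u_j v_j`. By Euler's identity,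
`Δ (r p) = (d + k + l) p + r Δ p` for `p ∈ W_{k,l}`, and solving `a s + r Δ s = q` by induction
on the bidegree shows that `Δ` maps `W_{k+1,l+1}` onto `W_{k,l}`. By rank-nullity,
`dim ℋ_{k+1,l+1} = dim W_{k+1,l+1} - dim W_{k,l}`, while `ℋ_{k,l} = W_{k,l}` when `k = 0` or
`l = 0`; the closed formula is then factorial arithmetic.
-/

open Finsupp
open scoped Nat

namespace MvPolynomial

variable {σ R : Type*} [CommSemiring R]

theorem IsWeightedHomogeneous.pderiv_eq_zero {w : σ → ℕ} {n : ℕ} {p : MvPolynomial σ R}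
    {i : σ} (hp : p.IsWeightedHomogeneous w n) (hn : n < w i) : pderiv i p = 0 := by
  rw [p.as_sum, map_sum]
  refine Finset.sum_eq_zero fun m hm => ?_
  have hmi : m i = 0 := by
    by_contra h
    have := le_weight_of_ne_zero' w h
    rw [hp (mem_support_iff.1 hm)] at this
    omega
  simp [pderiv_monomial, hmi]

theorem weightedHomogeneousSubmodule_inf_eq_restrictSupport {M N : Type*} [AddCommMonoid M]
    [AddCommMonoid N] (w : σ → M) (w' : σ → N) (m : M) (n : N) :
    weightedHomogeneousSubmodule R w m ⊓ weightedHomogeneousSubmodule R w' n =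
      restrictSupport R {d | weight w d = m ∧ weight w' d = n} := by
  simp only [weightedHomogeneousSubmodule_eq_finsupp_supported, restrictSupport,
    AddMonoidAlgebra.supported, Set.ofPred_and, Finsupp.supported_inter, Submodule.comap_inf]

end MvPolynomial

theorem Submodule.finrank_map_add_finrank_inf_ker {K V V₂ : Type*} [DivisionRing K]
    [AddCommGroup V] [Module K V] [AddCommGroup V₂] [Module K V₂] (p : Submodule K V)
    [FiniteDimensional K p] (f : V →ₗ[K] V₂) :
    Module.finrank K (p.map f) + Module.finrank K ↥(p ⊓ LinearMap.ker f) =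
      Module.finrank K p := by
  have h := (f.domRestrict p).finrank_range_add_finrank_ker
  have hker : (LinearMap.ker f).comap p.subtype = (p ⊓ LinearMap.ker f).comap p.subtype := by
    rw [Submodule.comap_inf, Submodule.comap_subtype_self, top_inf_eq]
  rwa [LinearMap.range_domRestrict, LinearMap.ker_domRestrict, hker,
    (Submodule.comapSubtypeEquivOfLe inf_le_left).finrank_eq] at h

theorem Nat.multichoose_succ_mul_factorial_mul_factorial (n k : ℕ) :
    (n + 1).multichoose k * n ! * k ! = (n + k)! := by
  rw [Nat.multichoose_eq, show n + 1 + k - 1 = n + k by omega,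
    Nat.add_choose_mul_factorial_mul_factorial]

section Bihomogeneous

variable {d k l : ℕ}

theorem weight_wU (m : Fin d ⊕ Fin d →₀ ℕ) : weight (wU d) m = ∑ j, m (Sum.inl j) := by
  simp [weight_eq_sum, Fintype.sum_sum_type, wU]

theorem weight_wV (m : Fin d ⊕ Fin d →₀ ℕ) : weight (wV d) m = ∑ j, m (Sum.inr j) := by
  simp [weight_eq_sum, Fintype.sum_sum_type, wV]

def bidegreeEquivSym (d k l : ℕ) :
    {m : Fin d ⊕ Fin d →₀ ℕ | weight (wU d) m = k ∧ weight (wV d) m = l} ≃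
      Sym (Fin d) k × Sym (Fin d) l :=
  ((Finsupp.equivFunOnFinite.trans (Equiv.sumArrowEquivProdArrow _ _ _)).subtypeEquiv
      (q := fun f => ∑ j, f.1 j = k ∧ ∑ j, f.2 j = l) (by simp [weight_wU, weight_wV])).trans
    (Equiv.subtypeProdEquivProd.trans
      ((Sym.equivNatSumOfFintype _ k).symm.prodCongr (Sym.equivNatSumOfFintype _ l).symm))

def bihomogeneousSubmodule (d k l : ℕ) : Submodule ℂ (MvPolynomial (Fin d ⊕ Fin d) ℂ) :=
  weightedHomogeneousSubmodule ℂ (wU d) k ⊓ weightedHomogeneousSubmodule ℂ (wV d) l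

theorem biHarmSpace_eq (d k l : ℕ) :
    biHarmSpace d k l = bihomogeneousSubmodule d k l ⊓ LinearMap.ker (laplaceUV d) := rfl

theorem bihomogeneousSubmodule_eq_restrictSupport (d k l : ℕ) :
    bihomogeneousSubmodule d k l =
      restrictSupport ℂ {m | weight (wU d) m = k ∧ weight (wV d) m = l} :=
  weightedHomogeneousSubmodule_inf_eq_restrictSupport _ _ _ _

instance (d k l : ℕ) : FiniteDimensional ℂ (bihomogeneousSubmodule d k l) := by
  rw [bihomogeneousSubmodule_eq_restrictSupport]
  have := Finite.of_equiv _ (bidegreeEquivSym d k l).symm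
  exact Module.Finite.of_basis (basisRestrictSupport ℂ _)

theorem finrank_bihomogeneousSubmodule (d k l : ℕ) :
    Module.finrank ℂ (bihomogeneousSubmodule d k l) = d.multichoose k * d.multichoose l := by
  rw [bihomogeneousSubmodule_eq_restrictSupport,
    Module.finrank_eq_nat_card_basis (basisRestrictSupport ℂ _),
    Nat.card_congr (bidegreeEquivSym d k l), Nat.card_prod, Nat.card_eq_fintype_card,
    Nat.card_eq_fintype_card, Sym.card_sym_eq_multichoose, Sym.card_sym_eq_multichoose,
    Fintype.card_fin]

theorem finrank_bihomogeneousSubmodule_mul_factorial (d k l : ℕ) :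
    Module.finrank ℂ (bihomogeneousSubmodule (d + 1) k l) * (d ! ^ 2 * k ! * l !) =
      (d + k)! * (d + l)! := by
  rw [finrank_bihomogeneousSubmodule, ← Nat.multichoose_succ_mul_factorial_mul_factorial,
    ← Nat.multichoose_succ_mul_factorial_mul_factorial]
  ring

theorem laplaceUV_apply (p : MvPolynomial (Fin d ⊕ Fin d) ℂ) :
    laplaceUV d p = ∑ j, pderiv (Sum.inl j) (pderiv (Sum.inr j) p) := by
  simp [laplaceUV]

theorem laplaceUV_mem_bihomogeneousSubmodule {p : MvPolynomial (Fin d ⊕ Fin d) ℂ}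
    (hp : p ∈ bihomogeneousSubmodule d (k + 1) (l + 1)) :
    laplaceUV d p ∈ bihomogeneousSubmodule d k l := by
  rw [laplaceUV_apply]
  exact sum_mem fun j _ => ⟨(hp.1.pderiv rfl).pderiv rfl, (hp.2.pderiv rfl).pderiv rfl⟩

theorem bihomogeneousSubmodule_le_ker_laplaceUV (hkl : k = 0 ∨ l = 0) :
    bihomogeneousSubmodule d k l ≤ LinearMap.ker (laplaceUV d) := by
  intro p hp
  rw [LinearMap.mem_ker, laplaceUV_apply]
  refine Finset.sum_eq_zero fun j _ => ?_
  rcases hkl with rfl | rfl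
  · exact (hp.1.pderiv (n' := 0) rfl).pderiv_eq_zero zero_lt_one
  · rw [hp.2.pderiv_eq_zero zero_lt_one, map_zero]

theorem biHarmSpace_eq_of_eq_zero (hkl : k = 0 ∨ l = 0) :
    biHarmSpace d k l = bihomogeneousSubmodule d k l :=
  inf_eq_left.2 (bihomogeneousSubmodule_le_ker_laplaceUV hkl)

def dotUV (d : ℕ) : MvPolynomial (Fin d ⊕ Fin d) ℂ := ∑ i, X (Sum.inl i) * X (Sum.inr i)

theorem dotUV_mem_bihomogeneousSubmodule : dotUV d ∈ bihomogeneousSubmodule d 1 1 :=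
  sum_mem fun _ _ =>
    ⟨(isWeightedHomogeneous_X ℂ _ _).mul (isWeightedHomogeneous_X ℂ _ _),
      (isWeightedHomogeneous_X ℂ _ _).mul (isWeightedHomogeneous_X ℂ _ _)⟩

theorem dotUV_mul_mem_bihomogeneousSubmodule {p : MvPolynomial (Fin d ⊕ Fin d) ℂ}
    (hp : p ∈ bihomogeneousSubmodule d k l) :
    dotUV d * p ∈ bihomogeneousSubmodule d (k + 1) (l + 1) := by
  rw [add_comm k, add_comm l]
  have hr := dotUV_mem_bihomogeneousSubmodule (d := d)
  exact ⟨hr.1.mul hp.1, hr.2.mul hp.2⟩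

theorem pderiv_inl_dotUV (j : Fin d) : pderiv (Sum.inl j) (dotUV d) = X (Sum.inr j) := by
  simp [dotUV, pderiv_X, Pi.single_apply]

theorem pderiv_inr_dotUV (j : Fin d) : pderiv (Sum.inr j) (dotUV d) = X (Sum.inl j) := by
  simp [dotUV, pderiv_X, Pi.single_apply]

theorem laplaceUV_dotUV : laplaceUV d (dotUV d) = d := by
  simp [laplaceUV_apply, pderiv_inr_dotUV, pderiv_X]

theorem laplaceUV_mul (f g : MvPolynomial (Fin d ⊕ Fin d) ℂ) :
    laplaceUV d (f * g) = laplaceUV d f * g + f * laplaceUV d g +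
      ∑ j, (pderiv (Sum.inl j) f * pderiv (Sum.inr j) g +
        pderiv (Sum.inr j) f * pderiv (Sum.inl j) g) := by
  simp only [laplaceUV_apply, pderiv_mul, map_add, Finset.sum_add_distrib, Finset.sum_mul,
    Finset.mul_sum]
  ring

theorem sum_X_inl_mul_pderiv {n : ℕ} {p : MvPolynomial (Fin d ⊕ Fin d) ℂ}
    (hp : p.IsWeightedHomogeneous (wU d) n) :
    ∑ j, X (Sum.inl j) * pderiv (Sum.inl j) p = n • p := by
  simpa [Fintype.sum_sum_type, wU] using hp.sum_weight_X_mul_pderiv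

theorem sum_X_inr_mul_pderiv {n : ℕ} {p : MvPolynomial (Fin d ⊕ Fin d) ℂ}
    (hp : p.IsWeightedHomogeneous (wV d) n) :
    ∑ j, X (Sum.inr j) * pderiv (Sum.inr j) p = n • p := by
  simpa [Fintype.sum_sum_type, wV] using hp.sum_weight_X_mul_pderiv

theorem laplaceUV_dotUV_mul {p : MvPolynomial (Fin d ⊕ Fin d) ℂ}
    (hp : p ∈ bihomogeneousSubmodule d k l) :
    laplaceUV d (dotUV d * p) = (d + k + l : ℕ) • p + dotUV d * laplaceUV d p := by
  rw [laplaceUV_mul, laplaceUV_dotUV]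
  simp only [pderiv_inl_dotUV, pderiv_inr_dotUV, Finset.sum_add_distrib,
    sum_X_inl_mul_pderiv hp.1, sum_X_inr_mul_pderiv hp.2]
  rw [← nsmul_eq_mul]
  module

theorem exists_smul_add_dotUV_mul_laplaceUV_eq {a : ℕ} (ha : 0 < a)
    {q : MvPolynomial (Fin d ⊕ Fin d) ℂ} (hq : q ∈ bihomogeneousSubmodule d k l) :
    ∃ s ∈ bihomogeneousSubmodule d k l, a • s + dotUV d * laplaceUV d s = q := by
  have harmonic : ∀ {k l a : ℕ} {q}, 0 < a → (k = 0 ∨ l = 0) →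
      q ∈ bihomogeneousSubmodule d k l →
      ∃ s ∈ bihomogeneousSubmodule d k l, a • s + dotUV d * laplaceUV d s = q :=
    fun {_ _ a q} ha hkl hq => ⟨(a : ℂ)⁻¹ • q, Submodule.smul_mem _ _ hq, by
      rw [map_smul, bihomogeneousSubmodule_le_ker_laplaceUV hkl hq, smul_zero, mul_zero, add_zero,
        ← Nat.cast_smul_eq_nsmul ℂ, smul_inv_smul₀ (Nat.cast_ne_zero.2 ha.ne')]⟩
  induction k generalizing l a q with
  | zero => exact harmonic ha (.inl rfl) hq
  | succ k ih =>
    obtain _ | l := l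
    · exact harmonic ha (.inr rfl) hq
    have ha' : (a : ℂ) ≠ 0 := Nat.cast_ne_zero.2 ha.ne'
    obtain ⟨w, hw, hweq⟩ :=
      ih (a := a + (d + k + l)) (by omega) (laplaceUV_mem_bihomogeneousSubmodule hq)
    -- `Δ (r w) = (d + k + l) w + r Δ w`, so `s := (q - r w) / a` has `Δ s = w`
    set s := (a : ℂ)⁻¹ • (q - dotUV d * w)
    have hs : laplaceUV d s = w := by
      rw [map_smul, map_sub, laplaceUV_dotUV_mul hw, ← hweq, inv_smul_eq_iff₀ ha',
        ← Nat.cast_smul_eq_nsmul ℂ, ← Nat.cast_smul_eq_nsmul ℂ]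
      push_cast
      module
    refine ⟨s, Submodule.smul_mem _ _ (sub_mem hq (dotUV_mul_mem_bihomogeneousSubmodule hw)),
      ?_⟩
    rw [hs, ← Nat.cast_smul_eq_nsmul ℂ, smul_inv_smul₀ ha', sub_add_cancel]

theorem map_laplaceUV_bihomogeneousSubmodule (hd : 0 < d) :
    (bihomogeneousSubmodule d (k + 1) (l + 1)).map (laplaceUV d) =
      bihomogeneousSubmodule d k l := by
  refine le_antisymm (Submodule.map_le_iff_le_comap.2 fun p hp =>
    laplaceUV_mem_bihomogeneousSubmodule hp) fun q hq => ?_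
  obtain ⟨s, hs, rfl⟩ := exists_smul_add_dotUV_mul_laplaceUV_eq (a := d + k + l) (by omega) hq
  exact ⟨dotUV d * s, dotUV_mul_mem_bihomogeneousSubmodule hs, laplaceUV_dotUV_mul hs⟩

theorem finrank_biHarmSpace_add_finrank_bihomogeneousSubmodule (hd : 0 < d) :
    Module.finrank ℂ (biHarmSpace d (k + 1) (l + 1)) +
        Module.finrank ℂ (bihomogeneousSubmodule d k l) =
      Module.finrank ℂ (bihomogeneousSubmodule d (k + 1) (l + 1)) := by
  rw [add_comm, ← map_laplaceUV_bihomogeneousSubmodule hd, biHarmSpace_eq]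
  exact Submodule.finrank_map_add_finrank_inf_ker _ _

end Bihomogeneous

/-- the dimension of `ℋ_{k,l}` is
`Z^{(d)}_{k,l} = (d-1)(k+l+d-1)(d+k-2)!(d+l-2)!/(((d-1)!)² k! l!)`. -/
theorem dim_biHarmSpace (d k l : ℕ) (hd : 2 ≤ d) :
    Module.finrank ℂ (biHarmSpace d k l) *
        ((d - 1).factorial ^ 2 * k.factorial * l.factorial) =
      (d - 1) * (k + l + d - 1) * (d + k - 2).factorial * (d + l - 2).factorial := by
  obtain ⟨e, rfl⟩ : ∃ e, d = e + 2 := ⟨d - 2, by omega⟩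
  rw [show e + 2 - 1 = e + 1 by omega, show k + l + (e + 2) - 1 = k + l + e + 1 by omega,
    show e + 2 + k - 2 = e + k by omega, show e + 2 + l - 2 = e + l by omega]
  have hW : ∀ k l, Module.finrank ℂ (bihomogeneousSubmodule (e + 2) k l) *
      ((e + 1)! ^ 2 * k ! * l !) = (e + 1 + k)! * (e + 1 + l)! :=
    finrank_bihomogeneousSubmodule_mul_factorial (e + 1)
  by_cases hkl : k = 0 ∨ l = 0
  · rw [biHarmSpace_eq_of_eq_zero hkl, hW]
    rcases hkl with rfl | rfl <;>
      simp only [Nat.add_right_comm e 1, Nat.factorial_succ, add_zero, zero_add] <;> ring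
  obtain ⟨k, rfl⟩ : ∃ k', k = k' + 1 := ⟨k - 1, by omega⟩
  obtain ⟨l, rfl⟩ : ∃ l', l = l' + 1 := ⟨l - 1, by omega⟩
  have hrank := finrank_biHarmSpace_add_finrank_bihomogeneousSubmodule (d := e + 2) (k := k)
    (l := l) (by omega)
  have hW₀ := hW k l
  have hW₁ := hW (k + 1) (l + 1)
  simp only [← add_assoc, Nat.add_right_comm e 1, Nat.factorial_succ] at hW₀ hW₁ ⊢
  linear_combination ((e + 1) * e !) ^ 2 * ((k + 1) * k !) * ((l + 1) * l !) * hrank + hW₁ -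
    (k + 1) * (l + 1) * hW₀
end
end
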